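/- For every natural number M ≥ 1 and every nonzero complex number z, (1/2)(z + 1/z)^{4M} + (1/2)(z − 1/z)^{4M} = ∑_{k=0}^{M} 2^{4k} (M/(M+k)) C(M+k, 2k) (z² − 1/z²)^{2(M−k)}. -/

import Mathlib

/-!
Put `a = (z + 1/z)²` and `b = -(z - 1/z)²`. Then `a + b = 4` and `-ab = (z² - 1/z²)²`, so the left
side is `(a^(2M) + b^(2M)) / 2` and the identity is Waring's formula expressing the power sum
`x^n + y^n` through `x + y` and `xy`, read off at `n = 2M` with the summation index reversed.
Waring's formula comes from `x^(n+2) + y^(n+2) = U (n+2) - xy U n` for the bivariate Fibonacci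
polynomials `U n = ∑ C(i, j) (-xy)^j (x+y)^(i-j)` over `i + j = n`: by Pascal's rule `U` satisfies
the same three-term recurrence as the power sums.
-/

open Finset

section BivariateFib

variable {R : Type*} [CommRing R]

/-- `bivariateFib 1 1 n = Nat.fib (n + 1)` (`Nat.fib_succ_eq_sum_choose`). The exponent `p.1 - p.2`
truncates only where `p.1.choose p.2 = 0`. -/
def bivariateFib (s q : R) (n : ℕ) : R :=
  ∑ p ∈ antidiagonal n, (p.1.choose p.2 : R) * q ^ p.2 * s ^ (p.1 - p.2)

theorem bivariateFib_add_two (s q : R) (n : ℕ) :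
    bivariateFib s q (n + 2) = s * bivariateFib s q (n + 1) + q * bivariateFib s q n := by
  have shift (i j : ℕ) : (i.choose (j + 1) : R) * s ^ (i - j) =
      s * ((i.choose (j + 1) : R) * s ^ (i - (j + 1))) := by
    rcases lt_or_ge j i with hji | hij
    · rw [show i - j = i - (j + 1) + 1 by omega, pow_succ]; ring
    · rw [Nat.choose_eq_zero_of_lt (by omega)]; simp
  unfold bivariateFib
  rw [Nat.sum_antidiagonal_succ, Nat.sum_antidiagonal_succ', Nat.sum_antidiagonal_succ', mul_add,
    mul_sum, mul_sum, add_assoc (s * _), ← sum_add_distrib, ← add_assoc]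
  congr 1
  · simp [pow_succ']
  refine sum_congr rfl fun p _ => ?_
  dsimp only
  rw [Nat.choose_succ_succ, Nat.add_sub_add_right]
  push_cast
  linear_combination q ^ (p.2 + 1) * shift p.1 p.2

theorem pow_add_pow_eq_bivariateFib (x y : R) :
    ∀ n : ℕ, x ^ (n + 2) + y ^ (n + 2) =
      bivariateFib (x + y) (-(x * y)) (n + 2) - x * y * bivariateFib (x + y) (-(x * y)) n
  | 0 => by simp [bivariateFib, Nat.sum_antidiagonal_succ]; ring
  | 1 => by simp [bivariateFib, Nat.sum_antidiagonal_succ]; ring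
  | n + 2 => by
    linear_combination (x + y) * pow_add_pow_eq_bivariateFib x y (n + 1) -
      x * y * pow_add_pow_eq_bivariateFib x y n - bivariateFib_add_two (x + y) (-(x * y)) (n + 2) +
      x * y * bivariateFib_add_two (x + y) (-(x * y)) n

theorem bivariateFib_two_mul (s q : R) (m : ℕ) :
    bivariateFib s q (2 * m) =
      ∑ t ∈ range (m + 1), ((m + t).choose (2 * t) : R) * q ^ (m - t) * s ^ (2 * t) := by
  rw [bivariateFib, Nat.sum_antidiagonal_eq_sum_range_succ_mk, Nat.succ_eq_add_one,
    show 2 * m + 1 = m + (m + 1) by ring, sum_range_add, sum_eq_zero fun k hk => ?_, zero_add]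
  · refine sum_congr rfl fun t ht => ?_
    have ht : t ≤ m := Nat.lt_succ_iff.mp (mem_range.mp ht)
    dsimp only
    rw [Nat.choose_symm_of_eq_add (show m + t = (2 * m - (m + t)) + 2 * t by omega),
      show 2 * m - (m + t) = m - t by omega, show m + t - (m - t) = 2 * t by omega]
  · rw [Nat.choose_eq_zero_of_lt (by simp at hk; omega)]
    simp

theorem pow_two_mul_add_pow_two_mul (x y : R) (m : ℕ) :
    x ^ (2 * (m + 1)) + y ^ (2 * (m + 1)) =
      ∑ t ∈ range (m + 2), (((m + 1 + t).choose (2 * t) : R) + (m + t).choose (2 * t)) *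
        (-(x * y)) ^ (m + 1 - t) * (x + y) ^ (2 * t) := by
  have shifted : -(x * y) * ∑ t ∈ range (m + 1),
      ((m + t).choose (2 * t) : R) * (-(x * y)) ^ (m - t) * (x + y) ^ (2 * t) =
      ∑ t ∈ range (m + 2), ((m + t).choose (2 * t) : R) * (-(x * y)) ^ (m + 1 - t) *
        (x + y) ^ (2 * t) := by
    rw [sum_range_succ _ (m + 1), Nat.choose_eq_zero_of_lt (by omega),
      Nat.cast_zero, zero_mul, zero_mul, add_zero, mul_sum]
    refine sum_congr rfl fun t ht => ?_
    rw [show m + 1 - t = m - t + 1 by simp at ht; omega, pow_succ]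
    ring
  rw [show 2 * (m + 1) = 2 * m + 2 by ring, pow_add_pow_eq_bivariateFib,
    show 2 * m + 2 = 2 * (m + 1) by ring, bivariateFib_two_mul, bivariateFib_two_mul]
  simp only [add_mul, sum_add_distrib]
  linear_combination shifted

end BivariateFib

theorem choose_add_choose_div_two {K : Type*} [Field K] [CharZero K] {m t : ℕ} (ht : t ≤ m + 1) :
    (((m + 1 + t).choose (2 * t) : K) + (m + t).choose (2 * t)) / 2 =
      (m + 1) / (m + 1 + t) * (m + 1 + t).choose (2 * t) := by
  have hnat : (m + 1 + t) * ((m + 1 + t).choose (2 * t) + (m + t).choose (2 * t)) =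
      2 * (m + 1) * (m + 1 + t).choose (2 * t) := by
    have h := Nat.choose_mul_succ_eq (m + t) (2 * t)
    rw [show m + t + 1 - 2 * t = m + 1 - t by omega, show m + t + 1 = m + 1 + t by ring] at h
    rw [mul_add, mul_comm (m + 1 + t) ((m + t).choose (2 * t)), h, mul_comm _ (m + 1 - t),
      ← add_mul, show m + 1 + t + (m + 1 - t) = 2 * (m + 1) by omega]
  have hcast : ((m : K) + 1 + t) * ((m + 1 + t).choose (2 * t) + (m + t).choose (2 * t)) =
      2 * (m + 1) * (m + 1 + t).choose (2 * t) := by exact_mod_cast hnat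
  have hpos : (m : K) + 1 + t ≠ 0 := by exact_mod_cast (by omega : m + 1 + t ≠ 0)
  field_simp
  linear_combination hcast

theorem stmt_5 (M : ℕ) (hM : 1 ≤ M) (z : ℂ) (hz : z ≠ 0) :
    (1 / 2) * (z + 1 / z) ^ (4 * M) + (1 / 2) * (z - 1 / z) ^ (4 * M)
    = ∑ k ∈ Finset.range (M + 1),
        2 ^ (4 * k) * ((M : ℂ) / (M + k)) * ((M + k).choose (2 * k)) *
          (z ^ 2 - 1 / z ^ 2) ^ (2 * (M - k)) := by
  obtain ⟨m, rfl⟩ : ∃ m, M = m + 1 := ⟨M - 1, by omega⟩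
  have hsum : (z + 1 / z) ^ 2 + -(z - 1 / z) ^ 2 = 4 := by field_simp; ring
  have hprod : -((z + 1 / z) ^ 2 * -(z - 1 / z) ^ 2) = (z ^ 2 - 1 / z ^ 2) ^ 2 := by
    field_simp; ring
  have hplus : (z + 1 / z) ^ (4 * (m + 1)) = ((z + 1 / z) ^ 2) ^ (2 * (m + 1)) := by
    rw [← pow_mul]; ring_nf
  have hminus : (z - 1 / z) ^ (4 * (m + 1)) = (-(z - 1 / z) ^ 2) ^ (2 * (m + 1)) := by
    rw [(even_two_mul _).neg_pow, ← pow_mul]; ring_nf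
  rw [← mul_add, hplus, hminus, pow_two_mul_add_pow_two_mul, hsum, hprod, mul_sum]
  refine sum_congr rfl fun t ht => ?_
  have hcoeff := choose_add_choose_div_two (K := ℂ) (Nat.lt_succ_iff.mp (mem_range.mp ht))
  have hfour : (4 : ℂ) ^ (2 * t) = 2 ^ (4 * t) := by rw [pow_mul, pow_mul]; norm_num
  rw [← pow_mul, hfour]
  push_cast
  linear_combination 2 ^ (4 * t) * (z ^ 2 - 1 / z ^ 2) ^ (2 * (m + 1 - t)) * hcoeff
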